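/- arXiv:math/0612860 — 2 statements merged into one kernel-verified Lean document; each statement's English description precedes it below -/
import Mathlib

section
/- Let F : [0,r] → ℝ be differentiable with F ≥ 0 and F(0) = 0, and let h : [0,r] → ℝ with h(0) = 0 and e^{-c₃} ≤ h' ≤ e^{c₃} for a constant c₃ > 0. Suppose F(s) ≥ h(s)/2 for all s ∈ [0,r], and F'(s) ≤ (1/F(s))(e^{c₃} s + C' s²) whenever F(s) > 0, for a constant C' ≥ 0. Then e^{-c₃} s / 2 ≤ F(s) ≤ e^{c₅} s for all s ∈ [0,r], for a suitable constant c₅. -/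
/-- Abstract scalar skeleton of the Jacobi field norm estimate: if `F ≥ 0`,
`F 0 = 0`, `F s ≥ h s / 2` where `h 0 = 0` and `e^{-c₃} ≤ h' ≤ e^{c₃}`, and
`F' ≤ (1/F)(e^{c₃} s + C' s²)` whenever `F > 0`, then
`e^{-c₃} s / 2 ≤ F s ≤ e^{c₅} s` for a suitable `c₅ > 0`. -/
theorem stmt_5 (r c₃ C' : ℝ) (hr : 0 < r) (hc₃ : 0 < c₃) (hC' : 0 ≤ C')
    (F h : ℝ → ℝ)
    (hF0 : F 0 = 0) (hh0 : h 0 = 0)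
    (hFnonneg : ∀ s ∈ Set.Icc 0 r, 0 ≤ F s)
    (hFh : ∀ s ∈ Set.Icc 0 r, h s / 2 ≤ F s)
    (hhdiff : ∀ s ∈ Set.Icc 0 r, DifferentiableAt ℝ h s)
    (hh' : ∀ s ∈ Set.Icc 0 r, Real.exp (-c₃) ≤ deriv h s ∧ deriv h s ≤ Real.exp c₃)
    (hFdiff : ∀ s ∈ Set.Icc 0 r, DifferentiableAt ℝ F s)
    (hF' : ∀ s ∈ Set.Icc 0 r, 0 < F s →
      deriv F s ≤ (1 / F s) * (Real.exp c₃ * s + C' * s ^ 2)) :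
    ∃ c₅ > 0, ∀ s ∈ Set.Icc 0 r,
      Real.exp (-c₃) * s / 2 ≤ F s ∧ F s ≤ Real.exp c₅ * s := by
  have hconv : Convex ℝ (Set.Icc (0:ℝ) r) := convex_Icc 0 r
  refine ⟨c₃ + C' * r + 1, by positivity, ?_⟩
  intro s hs
  obtain ⟨hs0, hsr⟩ := hs
  have hsIcc : s ∈ Set.Icc (0:ℝ) r := ⟨hs0, hsr⟩
  have h0Icc : (0:ℝ) ∈ Set.Icc (0:ℝ) r := ⟨le_refl _, hr.le⟩
  constructor
  · -- lower bound
    have hmono : MonotoneOn (fun t => h t - Real.exp (-c₃) * t) (Set.Icc 0 r) := by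
      apply monotoneOn_of_deriv_nonneg hconv
      · exact ContinuousOn.sub
          (fun x hx => ((hhdiff x hx).continuousAt).continuousWithinAt)
          ((continuous_const.mul continuous_id).continuousOn)
      · intro x hx
        have hx' : x ∈ Set.Icc (0:ℝ) r := interior_subset hx
        exact ((hhdiff x hx').sub ((differentiableAt_fun_id).const_mul _)).differentiableWithinAt
      · intro x hx
        have hx' : x ∈ Set.Icc (0:ℝ) r := interior_subset hx
        have hd : deriv (fun t => h t - Real.exp (-c₃) * t) x
            = deriv h x - Real.exp (-c₃) := by
          rw [deriv_fun_sub (hhdiff x hx') ((differentiableAt_fun_id).const_mul _),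
            deriv_const_mul _ differentiableAt_fun_id, deriv_id'']
          ring
        rw [hd]
        linarith [(hh' x hx').1]
    have := hmono h0Icc hsIcc hs0
    simp only [hh0, mul_zero, sub_zero, zero_sub] at this
    have hhs : Real.exp (-c₃) * s ≤ h s := by linarith
    have := hFh s hsIcc
    linarith
  · -- upper bound
    set c₅ := c₃ + C' * r + 1 with hc₅
    have hmono : MonotoneOn
        (fun t => Real.exp c₃ * t ^ 2 + C' * t ^ 3 - F t ^ 2) (Set.Icc 0 r) := by
      apply monotoneOn_of_deriv_nonneg hconv
      · apply ContinuousOn.sub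
        · exact Continuous.continuousOn (by continuity)
        · exact fun x hx => (((hFdiff x hx).continuousAt).pow 2).continuousWithinAt
      · intro x hx
        have hx' : x ∈ Set.Icc (0:ℝ) r := interior_subset hx
        exact ((((differentiableAt_pow 2).const_mul _).add
          ((differentiableAt_pow 3).const_mul _)).sub
          ((hFdiff x hx').pow 2)).differentiableWithinAt
      · intro x hx
        have hx' : x ∈ Set.Icc (0:ℝ) r := interior_subset hx
        have hder : HasDerivAt (fun t => Real.exp c₃ * t ^ 2 + C' * t ^ 3 - F t ^ 2)
            (Real.exp c₃ * (2 * x) + C' * (3 * x ^ 2)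
              - 2 * F x ^ 1 * deriv F x) x := by
          have h1 : HasDerivAt (fun t : ℝ => t ^ 2) (2 * x) x := by
            simpa using hasDerivAt_pow 2 x
          have h2 : HasDerivAt (fun t : ℝ => t ^ 3) (3 * x ^ 2) x := by
            simpa using hasDerivAt_pow 3 x
          have h3 : HasDerivAt (fun t => F t ^ 2) (2 * F x ^ 1 * deriv F x) x := by
            simpa using ((hFdiff x hx').hasDerivAt).fun_pow 2
          exact ((h1.const_mul _).add (h2.const_mul _)).sub h3
        rw [hder.deriv]
        have hx0 : 0 ≤ x := hx'.1
        have hkey : F x * deriv F x ≤ Real.exp c₃ * x + C' * x ^ 2 := by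
          rcases lt_or_eq_of_le (hFnonneg x hx') with hpos | hzero
          · have := hF' x hx' hpos
            have h4 : F x * deriv F x ≤ F x * ((1 / F x) * (Real.exp c₃ * x + C' * x ^ 2)) :=
              mul_le_mul_of_nonneg_left this hpos.le
            have h5 : F x * ((1 / F x) * (Real.exp c₃ * x + C' * x ^ 2))
                = Real.exp c₃ * x + C' * x ^ 2 := by
              field_simp
            rwa [h5] at h4
          · rw [← hzero, zero_mul]
            positivity
        simp only [pow_one]
        nlinarith [Real.exp_pos c₃]
    have hms := hmono h0Icc hsIcc hs0
    simp only [hF0, ne_eq, OfNat.ofNat_ne_zero, not_false_eq_true, zero_pow, mul_zero,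
      sub_zero, add_zero, zero_add, zero_sub] at hms
    have hsq : F s ^ 2 ≤ Real.exp c₃ * s ^ 2 + C' * s ^ 3 := by nlinarith
    have hbound : Real.exp c₃ * s ^ 2 + C' * s ^ 3 ≤ (Real.exp c₃ + C' * r) * s ^ 2 := by
      nlinarith [mul_le_mul_of_nonneg_right hsr (sq_nonneg s)]
    have hexp : Real.exp c₃ + C' * r ≤ (Real.exp c₅) ^ 2 := by
      have h1 : Real.exp c₅ = Real.exp c₃ * Real.exp (C' * r) * Real.exp 1 := by
        rw [hc₅, Real.exp_add, Real.exp_add]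
      have h2 : C' * r + 1 ≤ Real.exp (C' * r) := Real.add_one_le_exp _
      have h3 : (2:ℝ) ≤ Real.exp 1 := by
        linarith [Real.add_one_le_exp 1]
      have h4 : (1:ℝ) ≤ Real.exp c₃ := Real.one_le_exp hc₃.le
      have h5 : (1:ℝ) ≤ Real.exp c₅ := Real.one_le_exp (by positivity)
      have h6 : Real.exp c₃ * (C' * r + 1) ≤ Real.exp c₃ * Real.exp (C' * r) :=
        mul_le_mul_of_nonneg_left h2 (Real.exp_pos _).le
      have h7 : Real.exp c₃ * Real.exp (C' * r) * 2 ≤ Real.exp c₅ := by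
        rw [h1]
        have := mul_le_mul_of_nonneg_left h3
          (mul_nonneg (Real.exp_pos c₃).le (Real.exp_pos (C' * r)).le)
        linarith
      have hcr : 0 ≤ C' * r := mul_nonneg hC' hr.le
      nlinarith [mul_nonneg hcr (sub_nonneg.2 h4)]
    have hFs : 0 ≤ F s := hFnonneg s hsIcc
    have hEs : 0 ≤ Real.exp c₅ * s := by positivity
    nlinarith
end

section
/- Let u, v be positive functions on (0, r₀) such that u/v is nonincreasing. Define U(s) = ∫₀ˢ u and V(s) = ∫₀ˢ v (assumed finite). Then U/V is nonincreasing on (0, r₀); equivalently, for 0 < r < s < r₀, U(r)/U(s) ≥ V(r)/V(s). -/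
open MeasureTheory Set intervalIntegral

lemma gromov_integral_mono_Ioo {f g : ℝ → ℝ} {a b : ℝ} (hab : a ≤ b)
    (hf : IntervalIntegrable f volume a b) (hg : IntervalIntegrable g volume a b)
    (h : ∀ x ∈ Set.Ioo a b, f x ≤ g x) :
    ∫ x in a..b, f x ≤ ∫ x in a..b, g x := by
  apply intervalIntegral.integral_mono_ae_restrict hab hf hg
  have h0 : ∀ᵐ x ∂(volume.restrict (Set.Icc a b)), x ∉ ({a, b} : Set ℝ) :=
    ae_restrict_of_ae (by
      rw [MeasureTheory.ae_iff]
      simp only [not_not]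
      exact (Set.toFinite ({a, b} : Set ℝ)).measure_zero volume)
  filter_upwards [MeasureTheory.ae_restrict_mem measurableSet_Icc, h0] with x hx hx'
  rcases eq_or_lt_of_le hx.1 with h1 | h1
  · exact absurd (Or.inl h1.symm) hx'
  rcases eq_or_lt_of_le hx.2 with h2 | h2
  · exact absurd (Or.inr h2) hx'
  exact h x ⟨h1, h2⟩

/-- Gromov's integration lemma: if `u, v > 0` on `(0, r₀)` and `u/v` is
nonincreasing, then so is the ratio of the integrals `U/V`; equivalently,
for `0 < r < s < r₀`, `U(r)/U(s) ≥ V(r)/V(s)`. -/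
theorem stmt_6 (r₀ : ℝ) (hr₀ : 0 < r₀) (u v : ℝ → ℝ)
    (hu : ∀ s ∈ Set.Ioo 0 r₀, 0 < u s)
    (hv : ∀ s ∈ Set.Ioo 0 r₀, 0 < v s)
    (hmono : AntitoneOn (fun s => u s / v s) (Set.Ioo 0 r₀))
    (huint : ∀ s ∈ Set.Ioo 0 r₀, IntervalIntegrable u MeasureTheory.volume 0 s)
    (hvint : ∀ s ∈ Set.Ioo 0 r₀, IntervalIntegrable v MeasureTheory.volume 0 s) :
    AntitoneOn (fun s => (∫ t in (0:ℝ)..s, u t) / ∫ t in (0:ℝ)..s, v t)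
      (Set.Ioo 0 r₀) ∧
    ∀ r s : ℝ, 0 < r → r < s → s < r₀ →
      (∫ t in (0:ℝ)..r, v t) / (∫ t in (0:ℝ)..s, v t) ≤
      (∫ t in (0:ℝ)..r, u t) / (∫ t in (0:ℝ)..s, u t) := by
  -- positivity of the integrals
  have Upos : ∀ s ∈ Set.Ioo 0 r₀, 0 < ∫ t in (0:ℝ)..s, u t := by
    intro s hs
    apply intervalIntegral.intervalIntegral_pos_of_pos_on (huint s hs)
    · intro x hx; exact hu x ⟨hx.1, hx.2.trans hs.2⟩
    · exact hs.1
  have Vpos : ∀ s ∈ Set.Ioo 0 r₀, 0 < ∫ t in (0:ℝ)..s, v t := by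
    intro s hs
    apply intervalIntegral.intervalIntegral_pos_of_pos_on (hvint s hs)
    · intro x hx; exact hv x ⟨hx.1, hx.2.trans hs.2⟩
    · exact hs.1
  -- key inequality
  have key : ∀ r s : ℝ, 0 < r → r < s → s < r₀ →
      (∫ t in (0:ℝ)..s, u t) * (∫ t in (0:ℝ)..r, v t) ≤
      (∫ t in (0:ℝ)..r, u t) * (∫ t in (0:ℝ)..s, v t) := by
    intro r s hr hrs hs
    have hrI : r ∈ Set.Ioo 0 r₀ := ⟨hr, hrs.trans hs⟩
    have hsI : s ∈ Set.Ioo 0 r₀ := ⟨hr.trans hrs, hs⟩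
    set c : ℝ := u r / v r with hc
    have hvr : 0 < v r := hv r hrI
    have hur : 0 < u r := hu r hrI
    -- integrability on [r, s]
    have hurs : IntervalIntegrable u volume r s :=
      (huint s hsI).mono_set (by
        rw [Set.uIcc_of_le hrs.le, Set.uIcc_of_le (hr.trans hrs).le]
        exact Set.Icc_subset_Icc hr.le le_rfl)
    have hvrs : IntervalIntegrable v volume r s :=
      (hvint s hsI).mono_set (by
        rw [Set.uIcc_of_le hrs.le, Set.uIcc_of_le (hr.trans hrs).le]
        exact Set.Icc_subset_Icc hr.le le_rfl)
    -- c * V r ≤ U r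
    have h1 : c * (∫ t in (0:ℝ)..r, v t) ≤ ∫ t in (0:ℝ)..r, u t := by
      rw [← intervalIntegral.integral_const_mul]
      apply gromov_integral_mono_Ioo hr.le ((hvint r hrI).const_mul c) (huint r hrI)
      intro x hx
      have hxI : x ∈ Set.Ioo 0 r₀ := ⟨hx.1, hx.2.trans (hrs.trans hs)⟩
      have := hmono hxI hrI hx.2.le
      have hvx := hv x hxI
      rw [div_le_div_iff₀ hvr hvx] at this
      calc c * v x = u r * v x / v r := by rw [hc]; ring
        _ ≤ u x * v r / v r := by
            apply div_le_div_of_nonneg_right ?_ hvr.le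
            linarith
        _ = u x := by field_simp
    -- ∫ r..s u ≤ c * ∫ r..s v
    have h2 : (∫ t in r..s, u t) ≤ c * ∫ t in r..s, v t := by
      rw [← intervalIntegral.integral_const_mul]
      apply gromov_integral_mono_Ioo hrs.le hurs (hvrs.const_mul c)
      intro x hx
      have hxI : x ∈ Set.Ioo 0 r₀ := ⟨hr.trans hx.1, hx.2.trans hs⟩
      have := hmono hrI hxI hx.1.le
      have hvx := hv x hxI
      rw [div_le_div_iff₀ hvx hvr] at this
      calc u x = u x * v r / v r := by field_simp
        _ ≤ u r * v x / v r := by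
            apply div_le_div_of_nonneg_right ?_ hvr.le
            linarith
        _ = c * v x := by rw [hc]; ring
    -- splitting
    have hUsplit : (∫ t in (0:ℝ)..s, u t) = (∫ t in (0:ℝ)..r, u t) + ∫ t in r..s, u t :=
      (intervalIntegral.integral_add_adjacent_intervals (huint r hrI) hurs).symm
    have hVsplit : (∫ t in (0:ℝ)..s, v t) = (∫ t in (0:ℝ)..r, v t) + ∫ t in r..s, v t :=
      (intervalIntegral.integral_add_adjacent_intervals (hvint r hrI) hvrs).symm
    have hVr : 0 < ∫ t in (0:ℝ)..r, v t := Vpos r hrI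
    have hIvs : 0 ≤ ∫ t in r..s, v t :=
      intervalIntegral.integral_nonneg hrs.le
        (fun x hx => (hv x ⟨hr.trans_le hx.1, hx.2.trans_lt hs⟩).le)
    rw [hUsplit, hVsplit]
    nlinarith [mul_le_mul_of_nonneg_right h2 hVr.le, mul_le_mul_of_nonneg_left h1 hIvs]
  constructor
  · intro x hx y hy hxy
    rcases eq_or_lt_of_le hxy with rfl | hlt
    · exact le_rfl
    simp only
    rw [div_le_div_iff₀ (Vpos y hy) (Vpos x hx)]
    exact key x y hx.1 hlt hy.2
  · intro r s hr hrs hs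
    have hrI : r ∈ Set.Ioo 0 r₀ := ⟨hr, hrs.trans hs⟩
    have hsI : s ∈ Set.Ioo 0 r₀ := ⟨hr.trans hrs, hs⟩
    rw [div_le_div_iff₀ (Vpos s hsI) (Upos s hsI)]
    nlinarith [key r s hr hrs hs]
end
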